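/- Let f : X → Y be a continuous map of topological spaces that is open and surjective, and assume all fibers of f are connected. Then for every sheaf G of k-modules on Y, the unit G → f_* f^* G of the pullback–pushforward adjunction is an isomorphism of sheaves on Y. -/

import Mathlib

open CategoryTheory TopologicalSpace

universe u

namespace Statement18

open CategoryTheory.Limits Opposite TopCat TopCat.Presheaf

noncomputable section

universe v

variable {C : Type v} [Category.{u} C] {FC : C → C → Type*} {CC : C → Type u}
  [∀ X Y, FunLike (FC X Y) (CC X) (CC Y)] [ConcreteCategory.{u} C FC]
  [HasColimits C] [HasLimits C]
  [PreservesLimits (forget C)] [PreservesFilteredColimits (forget C)]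
  [(forget C).ReflectsIsomorphisms]

variable {X Y : TopCat.{u}} (f : X ⟶ Y)

/-- The stalk map of `toSheafify` is injective. -/
theorem stalk_toSheafify_injective (P : X.Presheaf C) (x : X) :
    Function.Injective
      ((stalkFunctor C x).map (CategoryTheory.toSheafify (Opens.grothendieckTopology X) P)) := by
  intro a b hab
  obtain ⟨U₁, hxU₁, s, rfl⟩ := P.germ_exist a
  obtain ⟨U₂, hxU₂, t, rfl⟩ := P.germ_exist b
  rw [stalkFunctor_map_germ_apply, stalkFunctor_map_germ_apply] at hab
  obtain ⟨W, hxW, iWU₁, iWU₂, heq⟩ := germ_eq _ x hxU₁ hxU₂ _ _ hab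
  rw [← comp_apply, ← comp_apply, ← (CategoryTheory.toSheafify (Opens.grothendieckTopology X) P).naturality,
    ← (CategoryTheory.toSheafify (Opens.grothendieckTopology X) P).naturality, comp_apply, comp_apply] at heq
  have hsieve := CategoryTheory.Presheaf.equalizerSieve_mem (Opens.grothendieckTopology X)
    (CategoryTheory.toSheafify (Opens.grothendieckTopology X) P) _ _ heq
  obtain ⟨V, g, hg, hxV⟩ := hsieve x hxW
  refine germ_ext P V hxV (g ≫ iWU₁) (g ≫ iWU₂) ?_
  have hg' : P.map g.op (P.map iWU₁.op s) = P.map g.op (P.map iWU₂.op t) := hg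
  rw [op_comp, op_comp, P.map_comp, P.map_comp, comp_apply, comp_apply]
  exact hg'

theorem stalk_toSheafify_surjective (P : X.Presheaf C) (x : X) :
    Function.Surjective
      ((stalkFunctor C x).map (CategoryTheory.toSheafify (Opens.grothendieckTopology X) P)) := by
  have h : TopCat.Presheaf.IsLocallySurjective
      (CategoryTheory.toSheafify (Opens.grothendieckTopology X) P) :=
    (inferInstance : CategoryTheory.Presheaf.IsLocallySurjective
      (Opens.grothendieckTopology X) (CategoryTheory.toSheafify (Opens.grothendieckTopology X) P))
  exact (locally_surjective_iff_surjective_on_stalks _).mp h x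

theorem isIso_stalk_toSheafify (P : X.Presheaf C) (x : X) :
    IsIso ((stalkFunctor C x).map (CategoryTheory.toSheafify (Opens.grothendieckTopology X) P)) := by
  have : IsIso ((forget C).map
      ((stalkFunctor C x).map (CategoryTheory.toSheafify (Opens.grothendieckTopology X) P))) := by
    rw [isIso_iff_bijective]
    exact ⟨stalk_toSheafify_injective P x, stalk_toSheafify_surjective P x⟩
  exact isIso_of_reflects_iso _ (forget C)


variable (C) in
/-- The pullback sheaf. -/
abbrev Fsh (G : CategoryTheory.Sheaf (Opens.grothendieckTopology Y) C) :
    CategoryTheory.Sheaf (Opens.grothendieckTopology X) C :=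
  (Functor.sheafPullbackConstruction.sheafPullback (Opens.map f) C
    (Opens.grothendieckTopology Y) (Opens.grothendieckTopology X)).obj G

variable (C) in
/-- The constructed pullback-pushforward adjunction. -/
abbrev adj2 := Functor.sheafPullbackConstruction.sheafAdjunctionContinuous (Opens.map f) C
  (Opens.grothendieckTopology Y) (Opens.grothendieckTopology X)

variable (C) in
/-- The sheafification map into the pullback sheaf. -/
def sh (G : CategoryTheory.Sheaf (Opens.grothendieckTopology Y) C) :
    (Presheaf.pullback C f).obj G.val ⟶ (Fsh C f G).val :=
  CategoryTheory.toSheafify (Opens.grothendieckTopology X) ((Presheaf.pullback C f).obj G.val)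

variable (C) in
/-- The canonical map `G ⟶ f_* (f^* G)` at the presheaf level. -/
def theta (G : CategoryTheory.Sheaf (Opens.grothendieckTopology Y) C) : G.val ⟶ (Presheaf.pushforward C f).obj (Fsh C f G).val :=
  (Presheaf.pullbackPushforwardAdjunction C f).unit.app G.val ≫
    (Presheaf.pushforward C f).map (sh C f G)

variable (C) in
/-- The canonical map on stalks `G_{f x} ⟶ (f^* G)_x`. -/
def beta (G : CategoryTheory.Sheaf (Opens.grothendieckTopology Y) C) (x : X) :
    Presheaf.stalk G.val (f x) ⟶ Presheaf.stalk (Fsh C f G).val x :=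
  Presheaf.stalkPullbackHom C f G.val x ≫
    (stalkFunctor C x).map (sh C f G)

theorem germ_beta (G : CategoryTheory.Sheaf (Opens.grothendieckTopology Y) C) (x : X) (W : Opens Y) (hW : f x ∈ W) :
    Presheaf.germ G.val W (f x) hW ≫ beta C f G x =
      (theta C f G).app (op W) ≫
        Presheaf.germ (Fsh C f G).val ((Opens.map f).obj W) x hW := by
  dsimp only [beta, theta]
  erw [← Category.assoc, germ_stalkPullbackHom, Category.assoc, stalkFunctor_map_germ]
  simp only [NatTrans.comp_app, Category.assoc]
  rfl

theorem beta_germ_apply (G : CategoryTheory.Sheaf (Opens.grothendieckTopology Y) C) (x : X) (W : Opens Y) (hW : f x ∈ W)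
    (t : ToType (G.val.obj (op W))) :
    beta C f G x (Presheaf.germ G.val W (f x) hW t) =
      Presheaf.germ (Fsh C f G).val ((Opens.map f).obj W) x hW
        ((theta C f G).app (op W) t) := by
  rw [← comp_apply, germ_beta, comp_apply]

theorem isIso_beta (G : CategoryTheory.Sheaf (Opens.grothendieckTopology Y) C) (x : X) : IsIso (beta C f G x) := by
  have h1 : IsIso (Presheaf.stalkPullbackHom C f G.val x) :=
    (Presheaf.stalkPullbackIso C f G.val x).isIso_hom
  have h2 : IsIso ((stalkFunctor C x).map (sh C f G)) :=
    isIso_stalk_toSheafify ((Presheaf.pullback C f).obj G.val) x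
  exact IsIso.comp_isIso' h1 h2

theorem beta_injective (G : CategoryTheory.Sheaf (Opens.grothendieckTopology Y) C) (x : X) : Function.Injective (beta C f G x) := by
  have := isIso_beta f G x
  exact (ConcreteCategory.bijective_of_isIso (beta C f G x)).1

theorem beta_surjective (G : CategoryTheory.Sheaf (Opens.grothendieckTopology Y) C) (x : X) : Function.Surjective (beta C f G x) := by
  have := isIso_beta f G x
  exact (ConcreteCategory.bijective_of_isIso (beta C f G x)).2

/-- Every section of the pullback sheaf is locally of the form `θ t`. -/
theorem local_form (G : CategoryTheory.Sheaf (Opens.grothendieckTopology Y) C) {O : Opens X} (σ : ToType ((Fsh C f G).val.obj (op O)))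
    {x' : X} (hx' : x' ∈ O) :
    ∃ (W : Opens Y) (hW : f x' ∈ W) (V : Opens X) (_ : x' ∈ V) (hVO : V ≤ O)
      (hVW : V ≤ (Opens.map f).obj W) (t : ToType (G.val.obj (op W))),
      (Fsh C f G).val.map (homOfLE hVO).op σ =
        (Fsh C f G).val.map (homOfLE hVW).op ((theta C f G).app (op W) t) := by
  obtain ⟨g, hg⟩ := beta_surjective f G x' (Presheaf.germ (Fsh C f G).val O x' hx' σ)
  obtain ⟨W, hW, t, ht⟩ := Presheaf.germ_exist G.val g
  rw [← ht, beta_germ_apply] at hg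
  obtain ⟨V, hxV, i₁, i₂, heq⟩ := Presheaf.germ_eq (Fsh C f G).val x' hW hx' _ _ hg
  refine ⟨W, hW, V, hxV, i₂.le, i₁.le, t, ?_⟩
  have e₁ : homOfLE i₂.le = i₂ := rfl
  have e₂ : homOfLE i₁.le = i₁ := rfl
  rw [e₁, e₂]
  exact heq.symm

/-- Transfer of germ equality through `β`. -/
theorem germ_eq_beta_of_local_form (G : CategoryTheory.Sheaf (Opens.grothendieckTopology Y) C) (x'' : X) (W : Opens Y) (hW : f x'' ∈ W)
    (t : ToType (G.val.obj (op W))) {O : Opens X} (hO : x'' ∈ O) (σ : ToType ((Fsh C f G).val.obj (op O)))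
    {V : Opens X} (hxV : x'' ∈ V) (hVO : V ≤ O) (hVW : V ≤ (Opens.map f).obj W)
    (hσ : (Fsh C f G).val.map (homOfLE hVO).op σ =
      (Fsh C f G).val.map (homOfLE hVW).op ((theta C f G).app (op W) t)) :
    Presheaf.germ (Fsh C f G).val O x'' hO σ =
      beta C f G x'' (Presheaf.germ G.val W (f x'') hW t) := by
  rw [beta_germ_apply]
  rw [← Presheaf.germ_res_apply (Fsh C f G).val (homOfLE hVO) x'' hxV σ, hσ,
    Presheaf.germ_res_apply (Fsh C f G).val (homOfLE hVW) x'' hxV]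

theorem germ_point_congr (Gp : Y.Presheaf C) {W W' : Opens Y} {y₁ y₂ : Y} (h : y₁ = y₂)
    (h₁ : y₁ ∈ W) (h₁' : y₁ ∈ W') (h₂ : y₂ ∈ W) (h₂' : y₂ ∈ W')
    (t : ToType (Gp.obj (op W))) (t' : ToType (Gp.obj (op W'))) :
    (Presheaf.germ Gp W y₁ h₁ t = Presheaf.germ Gp W' y₁ h₁' t') ↔
      (Presheaf.germ Gp W y₂ h₂ t = Presheaf.germ Gp W' y₂ h₂' t') := by
  subst h; rfl

theorem stalkPushforward_injective (hopen : IsOpenMap f)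
    (hconn : ∀ y : Y, IsConnected (f ⁻¹' {y})) (G : CategoryTheory.Sheaf (Opens.grothendieckTopology Y) C) (x : X) :
    Function.Injective (Presheaf.stalkPushforward C f (Fsh C f G).val x) := by
  intro a b hab
  obtain ⟨U, hU, s, rfl⟩ :=
    Presheaf.germ_exist ((Presheaf.pushforward C f).obj (Fsh C f G).val) a
  obtain ⟨U', hU', s', rfl⟩ :=
    Presheaf.germ_exist ((Presheaf.pushforward C f).obj (Fsh C f G).val) b
  rw [← comp_apply, ← comp_apply, Presheaf.stalkPushforward_germ,
    Presheaf.stalkPushforward_germ] at hab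
  set D : Opens Y := U ⊓ U' with hDdef
  have hxD : f x ∈ D := ⟨hU, hU'⟩
  have h1 : (Opens.map f).obj D ≤ (Opens.map f).obj U := fun _ hz => hz.1
  have h2 : (Opens.map f).obj D ≤ (Opens.map f).obj U' := fun _ hz => hz.2
  set s₀ : ToType ((Fsh C f G).val.obj (op ((Opens.map f).obj D))) := (Fsh C f G).val.map (homOfLE h1).op s with hs₀def
  set s₀' : ToType ((Fsh C f G).val.obj (op ((Opens.map f).obj D))) := (Fsh C f G).val.map (homOfLE h2).op s' with hs₀'def
  set Z : Set X := {x' | ∃ h : x' ∈ (Opens.map f).obj D,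
    Presheaf.germ (Fsh C f G).val ((Opens.map f).obj D) x' h s₀ =
      Presheaf.germ (Fsh C f G).val ((Opens.map f).obj D) x' h s₀'} with hZdef
  have hZD : Z ⊆ ((Opens.map f).obj D : Set X) := by rintro x' ⟨h, -⟩; exact h
  have hxZ : x ∈ Z := by
    refine ⟨(show x ∈ (Opens.map f).obj D from hxD), ?_⟩
    rw [hs₀def, hs₀'def, Presheaf.germ_res_apply, Presheaf.germ_res_apply]
    exact hab
  have hZopen : IsOpen Z := by
    rw [isOpen_iff_forall_mem_open]
    rintro x' ⟨hx'D, he⟩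
    obtain ⟨V, hxV, i₁, i₂, heq⟩ := Presheaf.germ_eq (Fsh C f G).val x' hx'D hx'D s₀ s₀' he
    refine ⟨V, ?_, V.isOpen, hxV⟩
    intro x'' hx''
    refine ⟨i₁.le hx'', ?_⟩
    rw [← Presheaf.germ_res_apply (Fsh C f G).val i₁ x'' hx'' s₀, heq,
      Presheaf.germ_res_apply (Fsh C f G).val i₂ x'' hx'' s₀']
  have hlocal : ∀ x', x' ∈ (Opens.map f).obj D → ∃ V : Opens X, x' ∈ V ∧
      ∀ x'', x'' ∈ V → f x'' = f x' → (x'' ∈ Z ↔ x' ∈ Z) := by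
    intro x' hx'D
    obtain ⟨W₁, hW₁, V₁, hxV₁, hV₁O, hV₁W, t₁, e₁⟩ := local_form f G s₀ hx'D
    obtain ⟨W₂, hW₂, V₂, hxV₂, hV₂O, hV₂W, t₂, e₂⟩ := local_form f G s₀' hx'D
    refine ⟨V₁ ⊓ V₂, ⟨hxV₁, hxV₂⟩, ?_⟩
    have key : ∀ x'' (hv1 : x'' ∈ V₁) (hv2 : x'' ∈ V₂),
        (x'' ∈ Z ↔ (Presheaf.germ G.val W₁ (f x'') (hV₁W hv1) t₁ =
          Presheaf.germ G.val W₂ (f x'') (hV₂W hv2) t₂)) := by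
      intro x'' hv1 hv2
      have hx''D : x'' ∈ (Opens.map f).obj D := hV₁O hv1
      have q1 := germ_eq_beta_of_local_form f G x'' W₁ (hV₁W hv1) t₁ hx''D s₀ hv1 hV₁O hV₁W e₁
      have q2 := germ_eq_beta_of_local_form f G x'' W₂ (hV₂W hv2) t₂ hx''D s₀' hv2 hV₂O hV₂W e₂
      constructor
      · rintro ⟨h, e⟩
        apply beta_injective f G x''
        rw [← q1, ← q2]
        exact e
      · intro e
        refine ⟨hx''D, ?_⟩
        rw [q1, q2, e]
    intro x'' hx'' hf
    rw [key x'' hx''.1 hx''.2, key x' hxV₁ hxV₂]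
    exact germ_point_congr G.val hf _ _ _ _ t₁ t₂
  choose Vl hVl1 hVl2 using hlocal
  have hfiber : ∀ y', y' ∈ D → ∀ x₀, f x₀ = y' → x₀ ∈ Z →
      ∀ x'', f x'' = y' → x'' ∈ Z := by
    intro y' hy' x₀ hfx₀ hx₀Z x'' hfx''
    haveI : ConnectedSpace (f ⁻¹' {y'} : Set X) := Subtype.connectedSpace (hconn y')
    set T : Set (f ⁻¹' {y'} : Set X) := Subtype.val ⁻¹' Z with hTdef
    have hmem : ∀ p : {x' : X // f x' = y' ∧ x' ∉ Z}, p.1 ∈ (Opens.map f).obj D := by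
      intro p
      show f p.1 ∈ D
      rw [p.2.1]
      exact hy'
    have hTopen : IsOpen T := hZopen.preimage continuous_subtype_val
    have hTclosed : IsClosed T := by
      rw [← isOpen_compl_iff]
      have hc : Tᶜ = Subtype.val ⁻¹' (⋃ (p : {x' : X // f x' = y' ∧ x' ∉ Z}),
          (Vl p.1 (hmem p) : Set X)) := by
        ext z
        simp only [hTdef, Set.mem_preimage, Set.mem_compl_iff, Set.mem_iUnion, SetLike.mem_coe]
        constructor
        · intro hz
          exact ⟨⟨z.1, z.2, hz⟩, hVl1 _ _⟩
        · rintro ⟨p, hp⟩ hzZ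
          exact p.2.2 ((hVl2 p.1 (hmem p) z.1 hp (z.2.trans p.2.1.symm)).mp hzZ)
      rw [hc]
      exact (isOpen_iUnion fun p => (Vl p.1 (hmem p)).isOpen).preimage continuous_subtype_val
    have hT : T = Set.univ :=
      IsClopen.eq_univ ⟨hTclosed, hTopen⟩ ⟨⟨x₀, hfx₀⟩, hx₀Z⟩
    have : (⟨x'', hfx''⟩ : (f ⁻¹' {y'} : Set X)) ∈ T := by
      rw [hT]; trivial
    exact this
  set W₀ : Opens Y := ⟨f '' Z, hopen Z hZopen⟩ with hW₀def
  have hW₀D : W₀ ≤ D := by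
    rintro y' ⟨x₀, hx₀, rfl⟩
    exact hZD hx₀
  have hxW₀ : f x ∈ W₀ := ⟨x, hxZ, rfl⟩
  have hpre : ∀ x'', x'' ∈ (Opens.map f).obj W₀ → x'' ∈ Z := by
    intro x'' hx''
    obtain ⟨x₀, hx₀Z, hfeq⟩ := hx''
    exact hfiber (f x'') (hW₀D ⟨x₀, hx₀Z, hfeq⟩) x₀ hfeq hx₀Z x'' rfl
  have hWU : (Opens.map f).obj W₀ ≤ (Opens.map f).obj U := fun _ hz => (hW₀D hz).1
  have hWU' : (Opens.map f).obj W₀ ≤ (Opens.map f).obj U' := fun _ hz => (hW₀D hz).2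
  have hWD : (Opens.map f).obj W₀ ≤ (Opens.map f).obj D := fun _ hz => hW₀D hz
  have hres : (Fsh C f G).val.map (homOfLE hWU).op s = (Fsh C f G).val.map (homOfLE hWU').op s' := by
    apply Presheaf.section_ext (Fsh C f G) ((Opens.map f).obj W₀)
    intro x'' hx''
    obtain ⟨hmemD, he⟩ := hpre x'' hx''
    rw [Presheaf.germ_res_apply, Presheaf.germ_res_apply]
    rw [← Presheaf.germ_res_apply (Fsh C f G).val (homOfLE h1) x'' hmemD s,
      ← Presheaf.germ_res_apply (Fsh C f G).val (homOfLE h2) x'' hmemD s']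
    exact he
  exact Presheaf.germ_ext ((Presheaf.pushforward C f).obj (Fsh C f G).val) W₀ hxW₀
    (homOfLE (hW₀D.trans inf_le_left)) (homOfLE (hW₀D.trans inf_le_right)) hres

theorem unit_val (G : CategoryTheory.Sheaf (Opens.grothendieckTopology Y) C) :
    ((adj2 C f).unit.app G).hom = theta C f G := by
  have e : ((adj2 C f).unit.app G).hom =
      (sheafToPresheaf _ _).map
        ((adj2 C f).unit.app G) := rfl
  rw [e]
  dsimp only [adj2, Functor.sheafPullbackConstruction.sheafAdjunctionContinuous]
  erw [Adjunction.map_restrictFullyFaithful_unit_app]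
  simp only [Iso.refl_hom, NatTrans.id_app, Functor.map_id, Category.comp_id,
    Adjunction.comp_unit_app]
  simp only [Functor.comp_obj, Functor.id_obj, Functor.map_id, Category.comp_id]
  erw [Functor.comp_map, CategoryTheory.Functor.map_id, Category.id_comp, Category.comp_id]
  rfl

theorem stalkPushforward_naturality {P Q : X.Presheaf C} (ts : P ⟶ Q) (x : X) :
    (stalkFunctor C (f x)).map ((Presheaf.pushforward C f).map ts) ≫
        Presheaf.stalkPushforward C f Q x =
      Presheaf.stalkPushforward C f P x ≫ (stalkFunctor C x).map ts := by
  apply Presheaf.stalk_hom_ext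
  intro U hxU
  conv_lhs => erw [← Category.assoc, stalkFunctor_map_germ, Category.assoc,
    Presheaf.stalkPushforward_germ]
  conv_rhs => erw [← Category.assoc, Presheaf.stalkPushforward_germ, stalkFunctor_map_germ]
  rfl

theorem unit_stalk_comp (G : CategoryTheory.Sheaf (Opens.grothendieckTopology Y) C) (x : X) :
    (stalkFunctor C (f x)).map
        ((adj2 C f).unit.app G).hom ≫
      Presheaf.stalkPushforward C f (Fsh C f G).val x = beta C f G x := by
  rw [unit_val]
  dsimp only [theta]
  erw [Functor.map_comp, Category.assoc, stalkPushforward_naturality, ← Category.assoc]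
  rfl

theorem unit_isIso (hopen : IsOpenMap f) (hsurj : Function.Surjective f)
    (hconn : ∀ y : Y, IsConnected (f ⁻¹' {y})) (G : CategoryTheory.Sheaf (Opens.grothendieckTopology Y) C) :
    IsIso ((TopCat.Sheaf.pullbackPushforwardAdjunction C f).unit.app G) := by
  suffices key : IsIso ((adj2 C f).unit.app G) by
    have e := Adjunction.unit_leftAdjointUniq_hom_app
      (TopCat.Sheaf.pullbackPushforwardAdjunction C f) (adj2 C f) G
    have i1 : IsIso ((TopCat.Sheaf.pushforward C f).map
        ((Adjunction.leftAdjointUniq (TopCat.Sheaf.pullbackPushforwardAdjunction C f)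
          (adj2 C f)).hom.app G)) :=
      Iso.isIso_hom ((TopCat.Sheaf.pushforward C f).mapIso
        ((Adjunction.leftAdjointUniq (TopCat.Sheaf.pullbackPushforwardAdjunction C f)
          (adj2 C f)).app G))
    rw [← e] at key
    exact @IsIso.of_isIso_comp_right _ _ _ _ _ _ _ i1 key
  have : ∀ y : Y, IsIso ((stalkFunctor C y).map
      ((adj2 C f).unit.app G).hom) := by
    intro y
    obtain ⟨x, rfl⟩ := hsurj y
    set φ := (stalkFunctor C (f x)).map
      ((adj2 C f).unit.app G).hom with hφ
    have hβ : IsIso (beta C f G x) := isIso_beta f G x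
    have hmono : Mono (Presheaf.stalkPushforward C f (Fsh C f G).val x) :=
      ConcreteCategory.mono_of_injective _ (stalkPushforward_injective f hopen hconn G x)
    set ψ := Presheaf.stalkPushforward C f (Fsh C f G).val x ≫ inv (beta C f G x) with hψ
    have hψmono : Mono ψ := mono_comp _ _
    have h1 : φ ≫ ψ = 𝟙 _ := by
      erw [hψ, ← Category.assoc, hφ, unit_stalk_comp, IsIso.hom_inv_id]
    have h2 : ψ ≫ φ = 𝟙 _ := by
      erw [← cancel_mono ψ, Category.assoc, h1]
      simp
    exact ⟨ψ, h1, h2⟩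
  exact TopCat.Presheaf.isIso_of_stalkFunctor_map_iso _

end

end Statement18

/-- Let `f : X → Y` be a continuous map of topological spaces that is
open and surjective, and assume all fibers of `f` are connected.  Then for every sheaf `G`
of `k`-modules on `Y`, the unit `G ⟶ f_* f^* G` of the pullback–pushforward adjunction is
an isomorphism of sheaves on `Y`. -/
theorem unit_isIso_of_open_surjective_connected_fibers
    (k : Type u) [Ring k] {X Y : TopCat.{u}} (f : X ⟶ Y)
    (hopen : IsOpenMap f) (hsurj : Function.Surjective f)
    (hconn : ∀ y : Y, IsConnected (f ⁻¹' {y}))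
    (G : Y.Sheaf (ModuleCat.{u} k)) :
    IsIso ((TopCat.Sheaf.pullbackPushforwardAdjunction (ModuleCat.{u} k) f).unit.app G) :=
  Statement18.unit_isIso f hopen hsurj hconn G
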